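/- Let α > 0, let ψ : Σ_A⁺ → ℝ be α-Hölder, and let λ > 0, h strictly positive α-Hölder and ν a Borel probability measure satisfy L_ψ h = λ h, ∫ L_ψ g dν = λ ∫ g dν for all continuous g, and ∫ h dν = 1. Then the Borel measure μ defined by dμ = h dν is a σ-invariant probability measure on Σ_A⁺ (i.e. μ(Σ_A⁺) = 1 and μ(σ^{−1}B) = μ(B) for every Borel set B). -/

import Mathlib

/-
Write `μ = h ν`. For continuous `g`, pulling `g` out of the transfer operator gives
`L_ψ((g ∘ σ) · h) = g · L_ψ h = λ g h`; integrating against the eigenmeasure `ν` and cancelling `λ`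
yields `∫ g ∘ σ dμ = ∫ g dμ`. As `h` is Hölder, hence continuous, this holds for every bounded
continuous `g`, and a finite Borel measure on a metrizable space is determined by these integrals,
so `σ_* μ = μ`.
-/

open scoped BigOperators Classical
open Filter Topology MeasureTheory

namespace SpectralGibbs

/-- The one-sided shift space `Σ_A⁺` determined by a `k × k` zero-one matrix `A`. -/
abbrev ShiftSpace (k : ℕ) (A : Matrix (Fin k) (Fin k) ℕ) : Type :=
  {x : ℕ → Fin k // ∀ m : ℕ, A (x m) (x (m + 1)) = 1}

/-- `A` has entries in `{0,1}`. -/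
def ZeroOne (k : ℕ) (A : Matrix (Fin k) (Fin k) ℕ) : Prop :=
  ∀ i j : Fin k, A i j = 0 ∨ A i j = 1

/-- `A` is aperiodic: some power of `A` has all entries positive. -/
def Aperiodic (k : ℕ) (A : Matrix (Fin k) (Fin k) ℕ) : Prop :=
  ∃ n : ℕ, 1 ≤ n ∧ ∀ i j : Fin k, 0 < (A ^ n) i j

/-- The shift map `σ`. -/
def shift (k : ℕ) (A : Matrix (Fin k) (Fin k) ℕ) :
    ShiftSpace k A → ShiftSpace k A :=
  fun x => ⟨fun m => x.1 (m + 1), fun m => x.2 (m + 1)⟩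

/-- The metric `d(x,y) = 2^{-min{m : x_m ≠ y_m}}` for `x ≠ y` (and `0` for `x = y`). -/
noncomputable def dist' (k : ℕ) (A : Matrix (Fin k) (Fin k) ℕ)
    (x y : ShiftSpace k A) : ℝ :=
  if x = y then 0 else (2 : ℝ)⁻¹ ^ sInf {m : ℕ | x.1 m ≠ y.1 m}

/-- `f` is `α`-Hölder: `sup_{x ≠ y} ‖f x - f y‖ / d(x,y)^α < ∞`. -/
def IsHolder {E : Type*} [NormedAddCommGroup E] (k : ℕ) (A : Matrix (Fin k) (Fin k) ℕ)
    (α : ℝ) (f : ShiftSpace k A → E) : Prop :=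
  ∃ C : ℝ, ∀ x y : ShiftSpace k A, ‖f x - f y‖ ≤ C * dist' k A x y ^ α

/-- The sequence `ix` obtained by prepending the symbol `i` to a sequence `x`. -/
def consSeq (k : ℕ) (i : Fin k) (x : ℕ → Fin k) : ℕ → Fin k
  | 0 => i
  | m + 1 => x m

/-- The point `ix ∈ Σ_A⁺`, defined whenever `A(i, x_0) = 1`. -/
def cons (k : ℕ) (A : Matrix (Fin k) (Fin k) ℕ) (i : Fin k) (x : ShiftSpace k A)
    (h : A i (x.1 0) = 1) : ShiftSpace k A :=
  ⟨consSeq k i x.1, by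
    intro m
    match m with
    | 0 => exact h
    | m + 1 => exact x.2 m⟩

/-- The transfer operator `(L_ψ g)(x) = Σ_{σ y = x} e^{ψ(y)} g(y)`. -/
noncomputable def transfer {E : Type*} [AddCommMonoid E] [SMul ℝ E]
    (k : ℕ) (A : Matrix (Fin k) (Fin k) ℕ)
    (ψ : ShiftSpace k A → ℝ) (g : ShiftSpace k A → E) (x : ShiftSpace k A) : E :=
  ∑ i : Fin k,
    if h : A i (x.1 0) = 1 then Real.exp (ψ (cons k A i x h)) • g (cons k A i x h) else 0

/-- `-φ` is normalized: `Σ_{σ y = x} e^{-φ(y)} = 1` for all `x`. -/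
def NormalizedNeg (k : ℕ) (A : Matrix (Fin k) (Fin k) ℕ) (φ : ShiftSpace k A → ℝ) : Prop :=
  ∀ x : ShiftSpace k A, transfer k A (fun y => -φ y) (fun _ => (1 : ℝ)) x = 1

/-- Birkhoff sum `φ^n = φ + φ∘σ + ⋯ + φ∘σ^{n-1}`. -/
noncomputable def birk (k : ℕ) (A : Matrix (Fin k) (Fin k) ℕ)
    (φ : ShiftSpace k A → ℝ) (n : ℕ) (x : ShiftSpace k A) : ℝ :=
  ∑ i ∈ Finset.range n, φ ((shift k A)^[i] x)

/-- A word `w = (w_1, …, w_{n+1})` (of length `n+1 ≥ 1`) is allowed if consecutive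
letters are compatible with `A`. -/
def Allowed (k : ℕ) (A : Matrix (Fin k) (Fin k) ℕ) {n : ℕ} (w : Fin (n + 1) → Fin k) : Prop :=
  ∀ i : Fin n, A (w i.castSucc) (w i.succ) = 1

/-- `W*`: the set of all allowed finite words (of length `≥ 1`). -/
def Words (k : ℕ) (A : Matrix (Fin k) (Fin k) ℕ) : Type :=
  Σ n : ℕ, {w : Fin (n + 1) → Fin k // Allowed k A w}

/-- The length `|w|` of a word. -/
def wordLen (k : ℕ) (A : Matrix (Fin k) (Fin k) ℕ) (w : Words k A) : ℕ := w.1 + 1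

/-- The last letter `t(w)` of a word. -/
def wordLast (k : ℕ) (A : Matrix (Fin k) (Fin k) ℕ) (w : Words k A) : Fin k :=
  w.2.1 (Fin.last w.1)

/-- The concatenated sequence `w x`. -/
def wordSeq (k : ℕ) {n : ℕ} (w : Fin (n + 1) → Fin k) (x : ℕ → Fin k) : ℕ → Fin k :=
  fun m => if h : m < n + 1 then w ⟨m, h⟩ else x (m - (n + 1))

theorem glue_mem (k : ℕ) (A : Matrix (Fin k) (Fin k) ℕ) {n : ℕ}
    (w : Fin (n + 1) → Fin k) (hw : Allowed k A w) (x : ShiftSpace k A)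
    (hx : A (w (Fin.last n)) (x.1 0) = 1) :
    ∀ m : ℕ, A (wordSeq k w x.1 m) (wordSeq k w x.1 (m + 1)) = 1 := by
  intro m
  unfold wordSeq
  rcases lt_trichotomy (m + 1) (n + 1) with h | h | h
  · have hm : m < n + 1 := by omega
    rw [dif_pos hm, dif_pos h]
    exact hw ⟨m, by omega⟩
  · have hm : m < n + 1 := by omega
    rw [dif_pos hm, dif_neg (by omega)]
    have h0 : m + 1 - (n + 1) = 0 := by omega
    rw [h0]
    have hl : (⟨m, hm⟩ : Fin (n + 1)) = Fin.last n := by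
      apply Fin.ext
      simp only [Fin.last]
      omega
    rw [hl]
    exact hx
  · rw [dif_neg (by omega), dif_neg (by omega)]
    have h1 : m + 1 - (n + 1) = (m - (n + 1)) + 1 := by omega
    rw [h1]
    exact x.2 (m - (n + 1))

/-- The point `w x ∈ Σ_A⁺`, for an allowed word `w` and `x` with `A(t(w), x_0) = 1`. -/
def glue (k : ℕ) (A : Matrix (Fin k) (Fin k) ℕ) {n : ℕ}
    (w : Fin (n + 1) → Fin k) (hw : Allowed k A w) (x : ShiftSpace k A)
    (hx : A (w (Fin.last n)) (x.1 0) = 1) : ShiftSpace k A :=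
  ⟨wordSeq k w x.1, glue_mem k A w hw x hx⟩

/-- Given a family of points `p j` with `A(j, (p j)_0) = 1`, the point `w p^{t(w)}`. -/
def wordPt (k : ℕ) (A : Matrix (Fin k) (Fin k) ℕ) {n : ℕ}
    (w : Fin (n + 1) → Fin k) (hw : Allowed k A w)
    (p : Fin k → ShiftSpace k A) (hp : ∀ j : Fin k, A j ((p j).1 0) = 1) : ShiftSpace k A :=
  glue k A w hw (p (w (Fin.last n))) (hp _)

/-- The point `w p^{t(w)}` for `w ∈ W*`. -/
def wpt (k : ℕ) (A : Matrix (Fin k) (Fin k) ℕ)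
    (p : Fin k → ShiftSpace k A) (hp : ∀ j : Fin k, A j ((p j).1 0) = 1)
    (w : Words k A) : ShiftSpace k A :=
  wordPt k A w.2.1 w.2.2 p hp

/-- The indicator function `χ_j` of the cylinder `[j] = {x : x_0 = j}`. -/
noncomputable def cylInd (k : ℕ) (A : Matrix (Fin k) (Fin k) ℕ) (j : Fin k) :
    ShiftSpace k A → ℝ :=
  fun x => if x.1 0 = j then 1 else 0


/-- The eigenvalue family of `π(f)|D_φ|⁻¹`, indexed by `W* × {1,2}`. -/
noncomputable def eigval (k : ℕ) (A : Matrix (Fin k) (Fin k) ℕ)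
    (xp : Fin k → ShiftSpace k A) (hxp : ∀ j : Fin k, A j ((xp j).1 0) = 1)
    (yp : Fin k → ShiftSpace k A) (hyp : ∀ j : Fin k, A j ((yp j).1 0) = 1)
    (zp : Fin k → ShiftSpace k A) (hzp : ∀ j : Fin k, A j ((zp j).1 0) = 1)
    (φ f : ShiftSpace k A → ℝ) : Words k A × Fin 2 → ℝ :=
  fun p =>
    (if p.2 = 0 then f (wpt k A yp hyp p.1) else f (wpt k A zp hzp p.1)) *
      Real.exp (-(birk k A φ (wordLen k A p.1) (wpt k A xp hxp p.1)))

end SpectralGibbs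

open BoundedContinuousFunction

section Density

variable {X : Type*} [MeasurableSpace X] {ν : Measure X} {h : X → ℝ}

lemma isProbabilityMeasure_withDensity_ofReal (hh : 0 ≤ᵐ[ν] h) (hint : ∫ x, h x ∂ν = 1) :
    IsProbabilityMeasure (ν.withDensity fun x => ENNReal.ofReal (h x)) := by
  have hhint : Integrable h ν := Integrable.of_integral_ne_zero (by simp [hint])
  constructor
  rw [withDensity_apply _ MeasurableSet.univ, setLIntegral_univ,
    ← ofReal_integral_eq_lintegral_ofReal hhint hh, hint, ENNReal.ofReal_one]

lemma integral_withDensity_ofReal (hm : Measurable h) (hh : 0 ≤ᵐ[ν] h) (g : X → ℝ) :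
    ∫ x, g x ∂ν.withDensity (fun x => ENNReal.ofReal (h x)) = ∫ x, h x * g x ∂ν := by
  rw [integral_withDensity_eq_integral_toReal_smul hm.ennreal_ofReal
    (ae_of_all _ fun _ => ENNReal.ofReal_lt_top)]
  exact integral_congr_ae (hh.mono fun x hx => by simp [ENNReal.toReal_ofReal hx])

lemma map_withDensity_ofReal_eq_self [TopologicalSpace X] [HasOuterApproxClosed X] [BorelSpace X]
    [IsFiniteMeasure (ν.withDensity fun x => ENNReal.ofReal (h x))]
    {T : X → X} (hT : Measurable T) (hm : Measurable h) (hh : 0 ≤ᵐ[ν] h)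
    (hinv : ∀ g : X →ᵇ ℝ, ∫ x, h x * g (T x) ∂ν = ∫ x, h x * g x ∂ν) :
    (ν.withDensity fun x => ENNReal.ofReal (h x)).map T =
      ν.withDensity fun x => ENNReal.ofReal (h x) :=
  ext_of_forall_integral_eq_of_IsFiniteMeasure fun g => by
    rw [integral_map hT.aemeasurable g.continuous.aestronglyMeasurable,
      integral_withDensity_ofReal hm hh, integral_withDensity_ofReal hm hh, hinv]

end Density

namespace SpectralGibbs

variable {k : ℕ} {A : Matrix (Fin k) (Fin k) ℕ}

instance : TopologicalSpace.PseudoMetrizableSpace (ShiftSpace k A) :=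
  TopologicalSpace.PseudoMetrizableSpace.subtype _

lemma continuous_shift : Continuous (shift k A) :=
  continuous_induced_rng.2 <| continuous_pi fun m =>
    (continuous_apply (m + 1)).comp continuous_subtype_val

lemma eventually_forall_lt_eq (x : ShiftSpace k A) (N : ℕ) :
    ∀ᶠ y in 𝓝 x, ∀ m < N, y.1 m = x.1 m := by
  have hcoord : ∀ m, ∀ᶠ y in 𝓝 x, y.1 m = x.1 m := fun m =>
    ((continuous_apply m).comp continuous_subtype_val).continuousAt.eventually_mem
      ((isOpen_discrete {x.1 m}).mem_nhds rfl)
  exact (eventually_all_finite (Set.finite_Iio N)).2 fun m _ => hcoord m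

lemma dist'_nonneg (x y : ShiftSpace k A) : 0 ≤ dist' k A x y := by
  unfold dist'
  split_ifs <;> positivity

lemma dist'_le_of_forall_lt_eq {x y : ShiftSpace k A} {N : ℕ} (hxy : ∀ m < N, x.1 m = y.1 m) :
    dist' k A x y ≤ 2⁻¹ ^ N := by
  unfold dist'
  split_ifs with heq
  · positivity
  · obtain ⟨m, hm⟩ : ∃ m, x.1 m ≠ y.1 m := by
      by_contra! hall
      exact heq (Subtype.ext (funext hall))
    have hN : N ≤ sInf {m | x.1 m ≠ y.1 m} :=
      le_csInf ⟨m, hm⟩ fun n hn => not_lt.1 fun hlt => hn (hxy n hlt)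
    exact pow_le_pow_of_le_one (by norm_num) (by norm_num) hN

lemma tendsto_dist' (x : ShiftSpace k A) : Tendsto (fun y => dist' k A y x) (𝓝 x) (𝓝 0) := by
  refine tendsto_order.2 ⟨fun a ha => Eventually.of_forall fun y => ha.trans_le (dist'_nonneg y x),
    fun ε hε => ?_⟩
  obtain ⟨N, hN⟩ := exists_pow_lt_of_lt_one hε (by norm_num : (2 : ℝ)⁻¹ < 1)
  filter_upwards [eventually_forall_lt_eq x N] with y hy
  exact (dist'_le_of_forall_lt_eq hy).trans_lt hN

lemma IsHolder.continuous {E : Type*} [NormedAddCommGroup E] {α : ℝ} (hα : 0 < α)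
    {f : ShiftSpace k A → E} (hf : IsHolder k A α f) : Continuous f := by
  obtain ⟨C, hC⟩ := hf
  refine continuous_iff_continuousAt.2 fun x => tendsto_iff_norm_sub_tendsto_zero.2 ?_
  have hbound : Tendsto (fun y => C * dist' k A y x ^ α) (𝓝 x) (𝓝 0) := by
    simpa [Real.zero_rpow hα.ne'] using ((tendsto_dist' x).rpow_const (Or.inr hα.le)).const_mul C
  exact squeeze_zero (fun _ => norm_nonneg _) (fun y => hC y x) hbound

lemma shift_cons (i : Fin k) (x : ShiftSpace k A) (hx : A i (x.1 0) = 1) :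
    shift k A (cons k A i x hx) = x :=
  rfl

lemma transfer_comp_shift_mul (ψ g h : ShiftSpace k A → ℝ) (x : ShiftSpace k A) :
    transfer k A ψ (fun y => g (shift k A y) * h y) x = g x * transfer k A ψ h x := by
  unfold transfer
  rw [Finset.mul_sum]
  refine Finset.sum_congr rfl fun i _ => ?_
  split_ifs
  · simp only [smul_eq_mul, shift_cons]
    ring
  · rw [mul_zero]

lemma integral_mul_comp_shift {ψ h : ShiftSpace k A → ℝ} {lam : ℝ} (hlam : lam ≠ 0)
    (hh : Continuous h) (heig : ∀ x, transfer k A ψ h x = lam * h x)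
    {ν : Measure (ShiftSpace k A)}
    (hνeig : ∀ g : ShiftSpace k A → ℝ, Continuous g →
      ∫ x, transfer k A ψ g x ∂ν = lam * ∫ x, g x ∂ν)
    {g : ShiftSpace k A → ℝ} (hg : Continuous g) :
    ∫ x, h x * g (shift k A x) ∂ν = ∫ x, h x * g x ∂ν := by
  have hdual := hνeig (fun y => g (shift k A y) * h y) ((hg.comp continuous_shift).mul hh)
  have hpull : (fun x => transfer k A ψ (fun y => g (shift k A y) * h y) x) =
      fun x => lam * (g x * h x) :=
    funext fun x => by rw [transfer_comp_shift_mul, heig, mul_left_comm]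
  rw [hpull, integral_const_mul] at hdual
  simpa only [mul_comm (h _)] using (mul_left_cancel₀ hlam hdual).symm

theorem stmt6_general (k : ℕ) (A : Matrix (Fin k) (Fin k) ℕ)
    (α : ℝ) (hα : 0 < α) (ψ : ShiftSpace k A → ℝ)
    (lam : ℝ) (hlam : 0 < lam) (h : ShiftSpace k A → ℝ)
    (hhpos : ∀ x, 0 < h x) (hhH : IsHolder k A α h)
    (heig : ∀ x, transfer k A ψ h x = lam * h x)
    (ν : Measure (ShiftSpace k A))
    (hνeig : ∀ g : ShiftSpace k A → ℝ, Continuous g →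
      ∫ x, transfer k A ψ g x ∂ν = lam * ∫ x, g x ∂ν)
    (hint : ∫ x, h x ∂ν = 1) :
    IsProbabilityMeasure (ν.withDensity fun x => ENNReal.ofReal (h x)) ∧
    ∀ B : Set (ShiftSpace k A), MeasurableSet B →
      (ν.withDensity fun x => ENNReal.ofReal (h x)) (shift k A ⁻¹' B) =
        (ν.withDensity fun x => ENNReal.ofReal (h x)) B := by
  have hh : Continuous h := hhH.continuous hα
  have hnonneg : 0 ≤ᵐ[ν] h := ae_of_all ν fun x => (hhpos x).le
  have hprob := isProbabilityMeasure_withDensity_ofReal hnonneg hint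
  have hinv := map_withDensity_ofReal_eq_self continuous_shift.measurable hh.measurable hnonneg
    fun g => integral_mul_comp_shift hlam.ne' hh heig hνeig g.continuous
  refine ⟨hprob, fun B hB => ?_⟩
  rw [← Measure.map_apply continuous_shift.measurable hB, hinv]

theorem stmt6 (k : ℕ) (hk : 1 ≤ k) (A : Matrix (Fin k) (Fin k) ℕ)
    (hA : ZeroOne k A) (hAper : Aperiodic k A)
    (α : ℝ) (hα : 0 < α) (ψ : ShiftSpace k A → ℝ) (hψ : IsHolder k A α ψ)
    (lam : ℝ) (hlam : 0 < lam) (h : ShiftSpace k A → ℝ)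
    (hhpos : ∀ x, 0 < h x) (hhH : IsHolder k A α h)
    (heig : ∀ x, transfer k A ψ h x = lam * h x)
    (ν : Measure (ShiftSpace k A)) (hν : IsProbabilityMeasure ν)
    (hνeig : ∀ g : ShiftSpace k A → ℝ, Continuous g →
      ∫ x, transfer k A ψ g x ∂ν = lam * ∫ x, g x ∂ν)
    (hint : ∫ x, h x ∂ν = 1) :
    IsProbabilityMeasure (ν.withDensity fun x => ENNReal.ofReal (h x)) ∧
    ∀ B : Set (ShiftSpace k A), MeasurableSet B →
      (ν.withDensity fun x => ENNReal.ofReal (h x)) (shift k A ⁻¹' B) =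
        (ν.withDensity fun x => ENNReal.ofReal (h x)) B :=
  stmt6_general k A α hα ψ lam hlam h hhpos hhH heig ν hνeig hint

end SpectralGibbs
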